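/- Let M be an m×m subgenerator matrix, m⃗ = -M·1 the associated nonnegative exit column vector, and for a subprobability row vector η let G(η) = M + m⃗ η. If η and η' are subprobability vectors with η ≤ η' componentwise, then for every x ≥ 0 the matrix exponentials satisfy e^{x G(η)} ≤ e^{x G(η')} entrywise. -/

import Mathlib

/-!
Since `m⃗ ≥ 0`, the matrix `x G(η)` has nonnegative off-diagonal entries and lies entrywise below
`x G(η')`. For such a pair `A ≤ B`, adding `c I` with `c` large makes both nonnegative, and on
nonnegative matrices the exponential series is entrywise monotone; the shift only multiplies both
exponentials by `e^c`.
-/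

open Matrix

namespace Matrix

variable {ι : Type*} [Fintype ι] [DecidableEq ι]

theorem pow_apply_mono {R : Type*} [Semiring R] [PartialOrder R] [IsOrderedRing R]
    {A B : Matrix ι ι R} (hA : ∀ i j, 0 ≤ A i j) (hAB : ∀ i j, A i j ≤ B i j) (n : ℕ) :
    ∀ i j, (A ^ n) i j ≤ (B ^ n) i j := by
  induction n with
  | zero => exact fun _ _ => le_rfl
  | succ n ih =>
    intro i j
    simp only [pow_succ, mul_apply]
    exact Finset.sum_le_sum fun k _ =>
      mul_le_mul (ih i k) (hAB k j) (hA k j) ((pow_apply_nonneg hA n i k).trans (ih i k))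

theorem hasSum_exp_apply (A : Matrix ι ι ℝ) (i j : ι) :
    HasSum (fun n : ℕ => (n.factorial : ℝ)⁻¹ * (A ^ n) i j) (NormedSpace.exp A i j) := by
  -- `NormedSpace.exp` does not depend on a norm; any algebra norm gives access to the series API.
  let := Matrix.linftyOpNormedRing (n := ι) (α := ℝ)
  let := Matrix.linftyOpNormedAlgebra (n := ι) (R := ℝ) (α := ℝ)
  exact Pi.hasSum.mp (Pi.hasSum.mp (NormedSpace.exp_series_hasSum_exp' (𝕂 := ℝ) A) i) j

theorem exp_apply_mono_of_nonneg {A B : Matrix ι ι ℝ} (hA : ∀ i j, 0 ≤ A i j)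
    (hAB : ∀ i j, A i j ≤ B i j) (i j : ι) :
    NormedSpace.exp A i j ≤ NormedSpace.exp B i j :=
  hasSum_le (fun n => mul_le_mul_of_nonneg_left (pow_apply_mono hA hAB n i j) (by positivity))
    (hasSum_exp_apply A i j) (hasSum_exp_apply B i j)

theorem exp_add_smul_one (A : Matrix ι ι ℝ) (c : ℝ) :
    NormedSpace.exp (A + c • 1) = Real.exp c • NormedSpace.exp A := by
  let := Matrix.linftyOpNormedRing (n := ι) (α := ℝ)
  let := Matrix.linftyOpNormedAlgebra (n := ι) (R := ℝ) (α := ℝ)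
  let : NormedAlgebra ℚ (Matrix ι ι ℝ) := NormedAlgebra.restrictScalars ℚ ℝ _
  have hexp : NormedSpace.exp (algebraMap ℝ (Matrix ι ι ℝ) c) = algebraMap ℝ _ (Real.exp c) := by
    rw [Real.exp_eq_exp_ℝ]
    exact (NormedSpace.algebraMap_exp_comm c).symm
  rw [exp_add_of_commute _ _ ((Commute.one_right A).smul_right c), ← Algebra.algebraMap_eq_smul_one,
    hexp, Algebra.algebraMap_eq_smul_one, mul_smul_one]

theorem exp_apply_mono_of_offDiag_nonneg {A B : Matrix ι ι ℝ}
    (hA : ∀ i j, i ≠ j → 0 ≤ A i j) (hAB : ∀ i j, A i j ≤ B i j) (i j : ι) :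
    NormedSpace.exp A i j ≤ NormedSpace.exp B i j := by
  set c := ∑ k, |A k k|
  have hshift : ∀ k l, 0 ≤ (A + c • 1) k l := by
    intro k l
    rcases eq_or_ne k l with rfl | hkl
    · have : |A k k| ≤ c := Finset.single_le_sum (fun k _ => abs_nonneg (A k k)) (Finset.mem_univ k)
      simp only [add_apply, smul_apply, one_apply_eq, smul_eq_mul, mul_one]
      linarith [neg_abs_le (A k k)]
    · simpa [one_apply_ne hkl] using hA k l hkl
  have hmono := exp_apply_mono_of_nonneg (B := B + c • 1) hshift
    (fun k l => add_le_add (hAB k l) le_rfl) i j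
  rw [exp_add_smul_one, exp_add_smul_one] at hmono
  exact le_of_mul_le_mul_left hmono (Real.exp_pos c)

end Matrix

theorem exp_monotone_in_eta_general (m : ℕ) (M : Matrix (Fin m) (Fin m) ℝ)
    (hoff : ∀ i j, i ≠ j → 0 ≤ M i j)
    (hrow : ∀ i, ∑ j, M i j ≤ 0)
    (mvec : Fin m → ℝ) (hm : mvec = (-M) *ᵥ (fun _ => 1))
    (η η' : Fin m → ℝ)
    (hη : (∀ i, 0 ≤ η i) ∧ ∑ i, η i ≤ 1)
    (hle : ∀ i, η i ≤ η' i)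
    (x : ℝ) (hx : 0 ≤ x) :
    ∀ i j, NormedSpace.exp (x • (M + vecMulVec mvec η)) i j
      ≤ NormedSpace.exp (x • (M + vecMulVec mvec η')) i j := by
  have hmvec_nonneg : ∀ i, 0 ≤ mvec i := fun i => by
    simpa [hm, mulVec, dotProduct] using hrow i
  have hoffG : ∀ i j, i ≠ j → 0 ≤ (x • (M + vecMulVec mvec η)) i j := fun i j hij => by
    simp only [Matrix.smul_apply, Matrix.add_apply, vecMulVec_apply, smul_eq_mul]
    exact mul_nonneg hx (add_nonneg (hoff i j hij) (mul_nonneg (hmvec_nonneg i) (hη.1 j)))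
  have hG : ∀ i j, (x • (M + vecMulVec mvec η)) i j ≤ (x • (M + vecMulVec mvec η')) i j :=
    fun i j => by
      simp only [Matrix.smul_apply, Matrix.add_apply, vecMulVec_apply, smul_eq_mul]
      gcongr
      exacts [hmvec_nonneg i, hle j]
  exact exp_apply_mono_of_offDiag_nonneg hoffG hG

/-- If `M` is a subgenerator matrix with exit vector `m⃗ = -M·1` and
`η ≤ η'` are subprobability row vectors, then for every `x ≥ 0` the matrix exponentials
of the rank-one updates `G(η) = M + m⃗η` satisfy `e^{xG(η)} ≤ e^{xG(η')}` entrywise. -/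
theorem exp_monotone_in_eta (m : ℕ) (M : Matrix (Fin m) (Fin m) ℝ)
    (hoff : ∀ i j, i ≠ j → 0 ≤ M i j)
    (hrow : ∀ i, ∑ j, M i j ≤ 0)
    (mvec : Fin m → ℝ) (hm : mvec = (-M) *ᵥ (fun _ => 1))
    (η η' : Fin m → ℝ)
    (hη : (∀ i, 0 ≤ η i) ∧ ∑ i, η i ≤ 1)
    (hη' : (∀ i, 0 ≤ η' i) ∧ ∑ i, η' i ≤ 1)
    (hle : ∀ i, η i ≤ η' i)
    (x : ℝ) (hx : 0 ≤ x) :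
    ∀ i j, NormedSpace.exp (x • (M + vecMulVec mvec η)) i j
      ≤ NormedSpace.exp (x • (M + vecMulVec mvec η')) i j :=
  exp_monotone_in_eta_general m M hoff hrow mvec hm η η' hη hle x hx
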